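/- arXiv:2603.28917 — 2 statements merged into one kernel-verified Lean document; each statement's English description precedes it below -/
import Mathlib

section
/- For positive definite X, Y, the S-divergence log det((X+Y)/2) − (1/2) log det(XY) is nonnegative, and equals zero if and only if X = Y. -/
/-! Write `X = S Sᵀ` with `S = X^{1/2}` and `Y = S M Sᵀ`. Each `log det` in the divergence shifts
by `2 log det S` under the congruence `A ↦ S A Sᵀ`, so the divergence of `X, Y` equals that of
`1, M`, namely `∑ᵢ (log ((1 + λᵢ) / 2) - ½ log λᵢ)` over the eigenvalues `λᵢ > 0` of `M`.
Each term is nonnegative by AM–GM, `√λ ≤ (1 + λ) / 2`, and vanishes only at `λ = 1`;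
hence the divergence vanishes iff `M = 1`, i.e. `X = Y`. -/

open Matrix

namespace Real

theorem sqrt_le_one_add_div_two {a : ℝ} (ha : 0 ≤ a) : √a ≤ (1 + a) / 2 := by
  nlinarith [sq_nonneg (√a - 1), sq_sqrt ha]

theorem sqrt_eq_one_add_div_two_iff {a : ℝ} (ha : 0 ≤ a) : √a = (1 + a) / 2 ↔ a = 1 := by
  constructor
  · intro h
    have hsqrt : √a = 1 := by nlinarith [sq_sqrt ha]
    rw [← sq_sqrt ha, hsqrt, one_pow]
  · rintro rfl
    norm_num

theorem half_mul_log_eq_log_sqrt {a : ℝ} (ha : 0 ≤ a) : 1 / 2 * log a = log √a := by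
  rw [log_sqrt ha]; ring

theorem log_one_add_div_two_sub_half_mul_log_nonneg {a : ℝ} (ha : 0 < a) :
    0 ≤ log ((1 + a) / 2) - 1 / 2 * log a := by
  rw [half_mul_log_eq_log_sqrt ha.le, sub_nonneg]
  exact log_le_log (sqrt_pos.2 ha) (sqrt_le_one_add_div_two ha.le)

theorem log_one_add_div_two_sub_half_mul_log_eq_zero_iff {a : ℝ} (ha : 0 < a) :
    log ((1 + a) / 2) - 1 / 2 * log a = 0 ↔ a = 1 := by
  rw [half_mul_log_eq_log_sqrt ha.le, sub_eq_zero, eq_comm, ← sqrt_eq_one_add_div_two_iff ha.le]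
  exact log_injOn_pos.eq_iff (sqrt_pos.2 ha) (by simp only [Set.mem_Ioi]; positivity)

end Real

namespace Matrix

variable {n : Type*} [Fintype n] [DecidableEq n]

noncomputable def sDivergence (X Y : Matrix n n ℝ) : ℝ :=
  Real.log ((1 / 2 : ℝ) • (X + Y)).det - (1 / 2 : ℝ) * Real.log (X * Y).det

theorem sDivergence_self (X : Matrix n n ℝ) : sDivergence X X = 0 := by
  rw [sDivergence, ← two_smul ℝ X, smul_smul, det_mul, ← sq, Real.log_pow]
  norm_num
  ring

theorem sDivergence_eq_of_posDef {A B : Matrix n n ℝ} (hA : A.PosDef) (hB : B.PosDef) :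
    sDivergence A B =
      Real.log ((1 / 2 : ℝ) • (A + B)).det - (Real.log A.det + Real.log B.det) / 2 := by
  rw [sDivergence, det_mul, Real.log_mul hA.det_pos.ne' hB.det_pos.ne']
  ring

theorem log_det_mul_mul_transpose {S A : Matrix n n ℝ} (hS : IsUnit S) (hA : A.det ≠ 0) :
    Real.log (S * A * Sᵀ).det = Real.log A.det + 2 * Real.log S.det := by
  have hs : S.det ≠ 0 := ((isUnit_iff_isUnit_det S).mp hS).ne_zero
  rw [det_mul, det_mul, det_transpose, Real.log_mul (mul_ne_zero hs hA) hs, Real.log_mul hs hA]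
  ring

theorem sDivergence_mul_mul_transpose {A B : Matrix n n ℝ} (hA : A.PosDef) (hB : B.PosDef)
    {S : Matrix n n ℝ} (hS : IsUnit S) :
    sDivergence (S * A * Sᵀ) (S * B * Sᵀ) = sDivergence A B := by
  have hconj {C : Matrix n n ℝ} (hC : C.PosDef) : (S * C * Sᵀ).PosDef := by
    simpa only [conjTranspose_eq_transpose_of_trivial] using
      hC.mul_mul_conjTranspose_same (vecMul_injective_iff_isUnit.mpr hS)
  have hmid : ((1 / 2 : ℝ) • (A + B)).PosDef := (hA.add hB).smul (by norm_num)
  have hsum : (1 / 2 : ℝ) • (S * A * Sᵀ + S * B * Sᵀ) = S * ((1 / 2 : ℝ) • (A + B)) * Sᵀ := by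
    rw [Matrix.mul_smul, Matrix.smul_mul, Matrix.mul_add, Matrix.add_mul]
  rw [sDivergence_eq_of_posDef (hconj hA) (hconj hB), sDivergence_eq_of_posDef hA hB, hsum,
    log_det_mul_mul_transpose hS hA.det_pos.ne', log_det_mul_mul_transpose hS hB.det_pos.ne',
    log_det_mul_mul_transpose hS hmid.det_pos.ne']
  ring

theorem IsHermitian.det_cfc {𝕜 : Type*} [RCLike 𝕜] {A : Matrix n n 𝕜} (hA : A.IsHermitian)
    (f : ℝ → ℝ) : (cfc f A).det = ∏ i, (f (hA.eigenvalues i) : 𝕜) := by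
  rw [hA.cfc_eq]
  simp [IsHermitian.cfc, -Unitary.conjStarAlgAut_apply]

theorem IsHermitian.eq_one_of_eigenvalues_eq_one {𝕜 : Type*} [RCLike 𝕜] {A : Matrix n n 𝕜}
    (hA : A.IsHermitian) (h : ∀ i, hA.eigenvalues i = 1) : A = 1 := by
  rw [hA.spectral_theorem, show hA.eigenvalues = 1 from funext h]
  simp

theorem IsHermitian.cfc_one_add_div_two {M : Matrix n n ℝ} (hM : M.IsHermitian) :
    cfc (fun x : ℝ ↦ (1 + x) / 2) M = (1 / 2 : ℝ) • (1 + M) := by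
  have : IsSelfAdjoint M := hM
  simp only [div_eq_inv_mul]
  rw [cfc_const_mul (2⁻¹ : ℝ) (fun x ↦ 1 + x) M, cfc_const_add (1 : ℝ) (fun x ↦ x) M, cfc_id' ℝ M]
  simp [Algebra.algebraMap_eq_smul_one]

theorem PosDef.sDivergence_one_left {M : Matrix n n ℝ} (hM : M.PosDef) :
    sDivergence 1 M = ∑ i, (Real.log ((1 + hM.isHermitian.eigenvalues i) / 2) -
      1 / 2 * Real.log (hM.isHermitian.eigenvalues i)) := by
  have hpos := hM.eigenvalues_pos
  rw [sDivergence, one_mul, ← hM.isHermitian.cfc_one_add_div_two, hM.isHermitian.det_cfc,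
    hM.isHermitian.det_eq_prod_eigenvalues, Finset.sum_sub_distrib, ← Finset.mul_sum]
  simp only [RCLike.ofReal_real_eq_id, id]
  rw [Real.log_prod fun i _ ↦ by have := hpos i; positivity,
    Real.log_prod fun i _ ↦ (hpos i).ne']

open scoped MatrixOrder in
theorem PosDef.exists_eq_mul_transpose_and_eq_mul_mul_transpose {X Y : Matrix n n ℝ}
    (hX : X.PosDef) (hY : Y.PosDef) :
    ∃ S M : Matrix n n ℝ, IsUnit S ∧ M.PosDef ∧ X = S * Sᵀ ∧ Y = S * M * Sᵀ := by
  set S := CFC.sqrt X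
  have hSt : Sᵀ = S := (CFC.sqrt_nonneg X).posSemidef.isHermitian.eq
  have hS : IsUnit S := CFC.isUnit_sqrt_iff_isStrictlyPositive.mpr hX.isStrictlyPositive
  have hSdet : IsUnit S.det := (isUnit_iff_isUnit_det S).mp hS
  have hinv_conj : (S⁻¹)ᴴ * Y * S⁻¹ = S⁻¹ * Y * S⁻¹ := by
    rw [conjTranspose_eq_transpose_of_trivial, transpose_nonsing_inv, hSt]
  refine ⟨S, S⁻¹ * Y * S⁻¹, hS, ?_, ?_, ?_⟩
  · rw [← hinv_conj]
    exact hY.conjTranspose_mul_mul_same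
      (mulVec_injective_iff_isUnit.mpr (isUnit_nonsing_inv_iff.mpr hS))
  · rw [hSt, CFC.sqrt_mul_sqrt_self X hX.posSemidef.nonneg]
  · rw [hSt, mul_assoc, mul_assoc, nonsing_inv_mul _ hSdet, mul_one,
      mul_nonsing_inv_cancel_left S Y hSdet]

end Matrix

/-- For positive definite `X, Y`, the S-divergence
`log det((X+Y)/2) − (1/2) log det(XY)` is nonnegative, and vanishes iff `X = Y`. -/
theorem s_divergence_nonneg_eq_zero_iff (n : ℕ) (X Y : Matrix (Fin n) (Fin n) ℝ)
    (hX : X.PosDef) (hY : Y.PosDef) :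
    0 ≤ Real.log ((1 / 2 : ℝ) • (X + Y)).det - (1 / 2 : ℝ) * Real.log (X * Y).det ∧
      (Real.log ((1 / 2 : ℝ) • (X + Y)).det - (1 / 2 : ℝ) * Real.log (X * Y).det = 0 ↔
        X = Y) := by
  change 0 ≤ sDivergence X Y ∧ (sDivergence X Y = 0 ↔ X = Y)
  obtain ⟨S, M, hS, hM, rfl, rfl⟩ := hX.exists_eq_mul_transpose_and_eq_mul_mul_transpose hY
  have hev := hM.eigenvalues_pos
  have hterm i := Real.log_one_add_div_two_sub_half_mul_log_nonneg (hev i)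
  have hdiv := sDivergence_mul_mul_transpose PosDef.one hM hS
  rw [mul_one, hM.sDivergence_one_left] at hdiv
  refine ⟨hdiv ▸ Finset.sum_nonneg fun i _ ↦ hterm i, fun h0 ↦ ?_,
    fun hXY ↦ hXY ▸ sDivergence_self _⟩
  have hev1 i : hM.isHermitian.eigenvalues i = 1 :=
    (Real.log_one_add_div_two_sub_half_mul_log_eq_zero_iff (hev i)).mp
      ((Finset.sum_eq_zero_iff_of_nonneg fun i _ ↦ hterm i).mp (hdiv ▸ h0) i (Finset.mem_univ i))
  rw [hM.isHermitian.eq_one_of_eigenvalues_eq_one hev1, mul_one]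
end

section
/- The Legendre–Fenchel conjugate of ψ(X) = trace(X log X − X) over positive definite X is ψ*(Y) = trace(exp Y) for symmetric Y; i.e., sup over positive definite X of [trace(YX) − trace(X log X − X)] = trace(exp Y). -/
/-!
Writing `X = exp L` with `L = log X`, the objective becomes `tr X + tr((Y - L) exp L)`, and
`tr exp Y ≥ tr exp L + tr((Y - L) exp L)` is Klein's inequality: `tr exp` lies above its tangent
at `L`. Diagonalising `Y = U diag(d) Uᵀ` and `L = V diag(μ) Vᵀ`, every trace involved is a sum
weighted by the squares of the entries of the orthogonal matrix `Uᵀ V`, so the inequality reduces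
to the scalar `(a - b + 1) eᵇ ≤ eᵃ`. Equality holds at `X = exp Y`, because Klein's inequality
applied in both directions to two symmetric logarithms of `exp Y` forces the linear term to vanish.
-/

open Matrix

namespace Matrix

variable {m : Type*} [Fintype m] [DecidableEq m]

theorem trace_conj_diagonal_mul_conj_diagonal (U V : Matrix m m ℝ) (a b : m → ℝ) :
    (U * diagonal a * star U * (V * diagonal b * star V)).trace
      = ∑ i, ∑ j, (star U * V) i j ^ 2 * a i * b j := by
  have hT : star V * U = (star U * V)ᵀ := by
    ext i j; simp [mul_apply, mul_comm]
  calc (U * diagonal a * star U * (V * diagonal b * star V)).trace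
      = (diagonal a * (star U * V) * diagonal b * (star U * V)ᵀ).trace := by
        simp only [← hT, Matrix.mul_assoc]; rw [trace_mul_comm]; simp only [Matrix.mul_assoc]
    _ = ∑ i, ∑ j, (star U * V) i j ^ 2 * a i * b j := by
        simp only [trace, diag_apply, mul_apply (M := _ * diagonal b), diagonal_mul, mul_diagonal,
          transpose_apply]
        refine Finset.sum_congr rfl fun i _ => Finset.sum_congr rfl fun j _ => by ring

theorem exp_unitary_conj_diagonal {U : Matrix m m ℝ} (hU : U ∈ unitary (Matrix m m ℝ))
    (d : m → ℝ) :
    NormedSpace.exp (U * diagonal d * star U) = U * diagonal (Real.exp ∘ d) * star U := by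
  have hUinv : U⁻¹ = star U := inv_eq_right_inv (Unitary.mul_star_self_of_mem hU)
  rw [← hUinv, exp_conj U _ (Unitary.isUnit_coe (U := ⟨U, hU⟩)), exp_diagonal]
  congr 3
  funext i
  simp [Real.exp_eq_exp_ℝ]

theorem IsHermitian.exists_unitary_diagonal {A : Matrix m m ℝ} (hA : A.IsHermitian) :
    ∃ U ∈ unitary (Matrix m m ℝ), ∃ d : m → ℝ, A = U * diagonal d * star U := by
  refine ⟨_, hA.eigenvectorUnitary.2, hA.eigenvalues, ?_⟩
  simpa [Unitary.conjStarAlgAut_apply] using hA.spectral_theorem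

theorem IsHermitian.posDef_exp {A : Matrix m m ℝ} (hA : A.IsHermitian) :
    (NormedSpace.exp A).PosDef := by
  obtain ⟨U, hU, d, rfl⟩ := hA.exists_unitary_diagonal
  rw [exp_unitary_conj_diagonal hU, IsUnit.posDef_star_right_conjugate_iff
    (Unitary.isUnit_coe (U := ⟨U, hU⟩))]
  exact PosDef.diagonal fun i => Real.exp_pos _

theorem conj_diagonal_mul_conj_diagonal {V : Matrix m m ℝ} (hV : V ∈ unitary (Matrix m m ℝ))
    (a b : m → ℝ) :
    V * diagonal a * star V * (V * diagonal b * star V) = V * diagonal (a * b) * star V := by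
  simp only [Matrix.mul_assoc, ← Matrix.mul_assoc (star V) V, Unitary.star_mul_self_of_mem hV,
    Matrix.one_mul, ← Matrix.mul_assoc (diagonal a), diagonal_mul_diagonal']
  rfl

theorem IsHermitian.trace_exp_add_trace_sub_mul_exp_le {A B : Matrix m m ℝ} (hA : A.IsHermitian)
    (hB : B.IsHermitian) :
    (NormedSpace.exp B).trace + ((A - B) * NormedSpace.exp B).trace
      ≤ (NormedSpace.exp A).trace := by
  obtain ⟨U, hU, d, rfl⟩ := hA.exists_unitary_diagonal
  obtain ⟨V, hV, μ, rfl⟩ := hB.exists_unitary_diagonal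
  have trace_right (b : m → ℝ) :
      (V * diagonal b * star V).trace = ∑ i, ∑ j, (star U * V) i j ^ 2 * b j := by
    have one_eq : U * diagonal 1 * star U = 1 := by simp [Unitary.mul_star_self_of_mem hU]
    rw [← Matrix.one_mul (V * diagonal b * star V), ← one_eq,
      trace_conj_diagonal_mul_conj_diagonal]
    simp
  have trace_left (a : m → ℝ) :
      (U * diagonal a * star U).trace = ∑ i, ∑ j, (star U * V) i j ^ 2 * a i := by
    have one_eq : V * diagonal 1 * star V = 1 := by simp [Unitary.mul_star_self_of_mem hV]
    rw [← Matrix.mul_one (U * diagonal a * star U), ← one_eq,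
      trace_conj_diagonal_mul_conj_diagonal]
    simp
  have tangent (i j : m) : (d i - μ j + 1) * Real.exp (μ j) ≤ Real.exp (d i) := by
    have := mul_le_mul_of_nonneg_right (Real.add_one_le_exp (d i - μ j)) (Real.exp_pos (μ j)).le
    rwa [← Real.exp_add, sub_add_cancel] at this
  calc (NormedSpace.exp (V * diagonal μ * star V)).trace
        + ((U * diagonal d * star U - V * diagonal μ * star V)
          * NormedSpace.exp (V * diagonal μ * star V)).trace
      = ∑ i, ∑ j, (star U * V) i j ^ 2 * ((d i - μ j + 1) * Real.exp (μ j)) := by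
        rw [sub_mul, trace_sub, exp_unitary_conj_diagonal hV, conj_diagonal_mul_conj_diagonal hV,
          trace_right, trace_right, trace_conj_diagonal_mul_conj_diagonal,
          ← Finset.sum_sub_distrib, ← Finset.sum_add_distrib]
        refine Finset.sum_congr rfl fun i _ => ?_
        rw [← Finset.sum_sub_distrib, ← Finset.sum_add_distrib]
        refine Finset.sum_congr rfl fun j _ => ?_
        simp only [Pi.mul_apply, Function.comp_apply]
        ring
    _ ≤ ∑ i, ∑ j, (star U * V) i j ^ 2 * Real.exp (d i) := by
        gcongr with i _ j _
        exact tangent i j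
    _ = (NormedSpace.exp (U * diagonal d * star U)).trace := by
        rw [exp_unitary_conj_diagonal hU, trace_left]
        simp

theorem IsHermitian.trace_sub_mul_exp_eq_zero_of_exp_eq {A B : Matrix m m ℝ}
    (hA : A.IsHermitian) (hB : B.IsHermitian) (h : NormedSpace.exp A = NormedSpace.exp B) :
    ((A - B) * NormedSpace.exp A).trace = 0 := by
  have hAB := hA.trace_exp_add_trace_sub_mul_exp_le hB
  have hBA := hB.trace_exp_add_trace_sub_mul_exp_le hA
  rw [← h] at hAB
  rw [← h, ← neg_sub, neg_mul, trace_neg] at hBA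
  linarith

end Matrix

/-- The Legendre–Fenchel conjugate of `ψ(X) = trace(X log X − X)` over positive definite `X`
is `ψ*(Y) = trace(exp Y)` for symmetric `Y`: the supremum over positive definite `X` of
`trace(YX) − trace(X log X − X)` equals `trace(exp Y)`.  Here `mlog` is the principal matrix
logarithm on the positive definite cone, characterized by symmetry and `exp (mlog X) = X`. -/
theorem conjugate_von_neumann_entropy (n : ℕ)
    (mlog : Matrix (Fin n) (Fin n) ℝ → Matrix (Fin n) (Fin n) ℝ)
    (hmlog : ∀ X : Matrix (Fin n) (Fin n) ℝ, X.PosDef →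
      (mlog X).IsSymm ∧ NormedSpace.exp (mlog X) = X)
    (Y : Matrix (Fin n) (Fin n) ℝ) (hY : Y.IsSymm) :
    IsLUB {r : ℝ | ∃ X : Matrix (Fin n) (Fin n) ℝ, X.PosDef ∧
        r = (Y * X).trace - (X * mlog X - X).trace}
      (NormedSpace.exp Y).trace := by
  have hYh : Y.IsHermitian := isHermitian_iff_isSymm.mpr hY
  have objective_eq (X L : Matrix (Fin n) (Fin n) ℝ) :
      (Y * X).trace - (X * L - X).trace = X.trace + ((Y - L) * X).trace := by
    rw [sub_mul, trace_sub, trace_sub, trace_mul_comm X L]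
    ring
  refine ⟨?_, fun b hb => hb ⟨NormedSpace.exp Y, hYh.posDef_exp, ?_⟩⟩
  · rintro r ⟨X, hX, rfl⟩
    obtain ⟨hL, hexpL⟩ := hmlog X hX
    rw [objective_eq]
    simpa only [hexpL] using
      hYh.trace_exp_add_trace_sub_mul_exp_le (isHermitian_iff_isSymm.mpr hL)
  · obtain ⟨hL, hexpL⟩ := hmlog _ hYh.posDef_exp
    rw [objective_eq, hYh.trace_sub_mul_exp_eq_zero_of_exp_eq (isHermitian_iff_isSymm.mpr hL)
      hexpL.symm, add_zero]
end
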